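/- arXiv:2012.13771 — 3 statements merged into one kernel-verified Lean document; each statement's English description precedes it below -/
import Mathlib

section
/- Let 0 ≤ α < 1, (αⱼ)ⱼ≥0 with 0 ≤ αⱼ ≤ α, and (aⱼ)ⱼ≥0 nonnegative with ∑ⱼ αⱼ aⱼ < ∞. If (νₖ) satisfies ν_{k+1} ≤ αₖ νₖ + (αₖ + αₖ²) aₖ for all k ≥ 0 and ν₀ ≤ 0, then ∑_{k=1}^∞ max(νₖ, 0) ≤ (1+α)/(1−α) · ∑_{j=0}^∞ αⱼ aⱼ. -/
/-!
The positive parts `pₖ = max νₖ 0` obey the linear recursion `pₖ₊₁ ≤ α pₖ + (1 + α) αₖ aₖ`.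
Summing it, and using `p₀ = 0` to bound `∑ pₖ` by `∑ pₖ₊₁`, gives
`(1 - α) ∑ pₖ₊₁ ≤ (1 + α) ∑ αₖ aₖ` for every partial sum.
-/

open Finset

lemma max_zero_le_of_le_mul_add {x y c d α : ℝ} (hc0 : 0 ≤ c) (hcα : c ≤ α) (hd : 0 ≤ d)
    (hy : y ≤ c * x + (c + c ^ 2) * d) :
    max y 0 ≤ α * max x 0 + (1 + α) * (c * d) := by
  have hx : c * x ≤ α * max x 0 :=
    (mul_le_mul_of_nonneg_left (le_max_left x 0) hc0).trans
      (mul_le_mul_of_nonneg_right hcα (le_max_right x 0))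
  have hcd : (c + c ^ 2) * d ≤ (1 + α) * (c * d) := by
    rw [show (c + c ^ 2) * d = (1 + c) * (c * d) by ring]
    gcongr
  refine max_le (by linarith) ?_
  have hα0 : 0 ≤ α := hc0.trans hcα
  positivity

section LinearRecursion

variable {p b : ℕ → ℝ} {α : ℝ}

lemma one_sub_mul_sum_range_succ_le (hα0 : 0 ≤ α) (hp : ∀ k, 0 ≤ p k) (hp0 : p 0 = 0)
    (hrec : ∀ k, p (k + 1) ≤ α * p k + b k) (N : ℕ) :
    (1 - α) * ∑ k ∈ range N, p (k + 1) ≤ ∑ k ∈ range N, b k := by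
  have hshift : ∑ k ∈ range N, p k ≤ ∑ k ∈ range N, p (k + 1) := by
    rw [← add_zero (∑ k ∈ range N, p (k + 1)), ← hp0, ← sum_range_succ']
    exact (le_add_of_nonneg_right (hp N)).trans_eq (sum_range_succ p N).symm
  have hstep : ∑ k ∈ range N, p (k + 1) ≤ α * ∑ k ∈ range N, p k + ∑ k ∈ range N, b k := by
    rw [mul_sum, ← sum_add_distrib]
    exact sum_le_sum fun k _ => hrec k
  nlinarith [mul_le_mul_of_nonneg_left hshift hα0]

lemma tsum_succ_le_tsum_div_one_sub (hα0 : 0 ≤ α) (hα : α < 1) (hp : ∀ k, 0 ≤ p k)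
    (hp0 : p 0 = 0) (hrec : ∀ k, p (k + 1) ≤ α * p k + b k) (hb : ∀ k, 0 ≤ b k)
    (hbsum : Summable b) :
    ∑' k, p (k + 1) ≤ (∑' k, b k) / (1 - α) := by
  have hpartial : ∀ N, ∑ k ∈ range N, p (k + 1) ≤ (∑' k, b k) / (1 - α) := fun N => by
    rw [le_div_iff₀ (sub_pos.mpr hα), mul_comm]
    exact (one_sub_mul_sum_range_succ_le hα0 hp hp0 hrec N).trans
      (hbsum.sum_le_tsum _ fun k _ => hb k)
  exact (summable_of_sum_range_le (fun k => hp (k + 1)) hpartial).tsum_le_of_sum_range_le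
    hpartial

end LinearRecursion

/-- Summability estimate (3.11+2): under the recursion
`ν_{k+1} ≤ αₖ νₖ + (αₖ + αₖ²) aₖ`, with `0 ≤ αₖ ≤ α < 1`, `aₖ ≥ 0`,
`∑ αⱼ aⱼ < ∞` and `ν₀ ≤ 0`, the positive parts of `ν` satisfy
`∑_{k=1}^∞ max(νₖ, 0) ≤ (1+α)/(1−α) ∑_{j=0}^∞ αⱼ aⱼ`. -/
theorem stmt_5 (ν αs a : ℕ → ℝ) (α : ℝ) (hα0 : 0 ≤ α) (hα : α < 1)
    (hαs : ∀ k, 0 ≤ αs k ∧ αs k ≤ α) (ha : ∀ k, 0 ≤ a k)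
    (hsum : Summable (fun j => αs j * a j))
    (hrec : ∀ k, ν (k + 1) ≤ αs k * ν k + (αs k + (αs k) ^ 2) * a k)
    (hν0 : ν 0 ≤ 0) :
    ∑' k : ℕ, max (ν (k + 1)) 0 ≤ (1 + α) / (1 - α) * ∑' j : ℕ, αs j * a j := by
  have hstep : ∀ k, max (ν (k + 1)) 0 ≤ α * max (ν k) 0 + (1 + α) * (αs k * a k) :=
    fun k => max_zero_le_of_le_mul_add (hαs k).1 (hαs k).2 (ha k) (hrec k)
  have hbound := tsum_succ_le_tsum_div_one_sub (p := fun k => max (ν k) 0) hα0 hα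
    (fun k => le_max_right _ _) (max_eq_right hν0) hstep
    (fun k => mul_nonneg (by linarith) (mul_nonneg (hαs k).1 (ha k))) (hsum.mul_left _)
  rwa [tsum_mul_left, mul_div_right_comm] at hbound
end

section
/- Let 0 ≤ αₖ ≤ α_{k+1} ≤ α < 1/3 for all k ≥ 0, and let (bₖ)ₖ≥0 be nonnegative reals and (aₖ)ₖ≥1 nonnegative reals (with a₀ = 0) satisfying, for all k ≥ 0, b_{k+1} − (1+αₖ) bₖ + αₖ b_{k−1} ≤ −(1−αₖ) a_{k+1} + 2 αₖ aₖ (with b_{−1} := b₀). Define μₖ = bₖ − αₖ b_{k−1} + 2 αₖ aₖ. Then (μₖ) is nonincreasing, bₖ ≤ b₀/(1−α) for all k, and ∑_{k=0}^∞ a_{k+1} ≤ b₀ / ((1−3α)(1−α)). -/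
/-!
Along the recursion the Lyapunov quantity `μₖ = bₖ − αₖ b_{k−1} + 2αₖ aₖ` drops by at least
`(1 − 3α) a_{k+1}` per step: monotonicity of `αₖ` absorbs the `b`-terms and `αₖ + 2α_{k+1} ≤ 3α`
the `a`-terms. Hence `μₖ ≤ μ₀ ≤ b₀`, which gives `bₖ ≤ b₀ + α b_{k−1}` and so `bₖ ≤ b₀/(1−α)`;
this in turn bounds `μₖ ≥ −α b₀/(1−α)`, and telescoping the decrease yields the bound on `∑ a_{k+1}`.
-/

open Finset

/-- `k - 1` is truncated, so `b (0 - 1) = b 0` encodes the convention `b₋₁ := b₀`. -/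
def lyapunov (αs b a : ℕ → ℝ) (k : ℕ) : ℝ :=
  b k - αs k * b (k - 1) + 2 * αs k * a k

lemma le_div_one_sub_of_le_add_mul_pred {x : ℕ → ℝ} {C α : ℝ} (hα0 : 0 ≤ α) (hα1 : α < 1)
    (h : ∀ k, x k ≤ C + α * x (k - 1)) (k : ℕ) : x k ≤ C / (1 - α) := by
  rw [le_div_iff₀ (by linarith)]
  induction k with
  | zero => linarith [h 0]
  | succ k ih =>
    have hk := h (k + 1)
    simp only [Nat.add_sub_cancel] at hk
    nlinarith

lemma tsum_le_sub_of_succ_add_le {μ c : ℕ → ℝ} {L : ℝ} (hc : ∀ k, 0 ≤ c k)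
    (hstep : ∀ k, μ (k + 1) + c k ≤ μ k) (hL : ∀ k, L ≤ μ k) : ∑' k, c k ≤ μ 0 - L := by
  refine Real.tsum_le_of_sum_range_le hc fun n => ?_
  calc ∑ k ∈ range n, c k ≤ ∑ k ∈ range n, (μ k - μ (k + 1)) :=
        sum_le_sum fun k _ => by linarith [hstep k]
    _ = μ 0 - μ n := sum_range_sub' μ n
    _ ≤ μ 0 - L := by linarith [hL n]

section

variable {α : ℝ} {αs b a : ℕ → ℝ}

lemma lyapunov_succ_add_le {k : ℕ} (hmono : αs k ≤ αs (k + 1)) (hk : αs k ≤ α)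
    (hk1 : αs (k + 1) ≤ α) (hb : 0 ≤ b k) (ha : 0 ≤ a (k + 1))
    (hrec : b (k + 1) - (1 + αs k) * b k + αs k * b (k - 1) ≤
      -(1 - αs k) * a (k + 1) + 2 * αs k * a k) :
    lyapunov αs b a (k + 1) + (1 - 3 * α) * a (k + 1) ≤ lyapunov αs b a k := by
  have hb_terms : 0 ≤ (αs (k + 1) - αs k) * b k := mul_nonneg (by linarith) hb
  have ha_terms : 0 ≤ (3 * α - αs k - 2 * αs (k + 1)) * a (k + 1) :=
    mul_nonneg (by linarith) ha
  simp only [lyapunov, Nat.add_sub_cancel]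
  linarith

lemma lyapunov_zero_le (hαs : 0 ≤ αs 0) (hb : 0 ≤ b 0) (ha0 : a 0 = 0) :
    lyapunov αs b a 0 ≤ b 0 := by
  simp only [lyapunov, Nat.zero_sub, ha0]
  linarith [mul_nonneg hαs hb]

lemma le_lyapunov_add_mul_pred {k : ℕ} (hαs : 0 ≤ αs k) (hk : αs k ≤ α) (hb : 0 ≤ b (k - 1))
    (ha : 0 ≤ a k) : b k ≤ lyapunov αs b a k + α * b (k - 1) := by
  have : αs k * b (k - 1) ≤ α * b (k - 1) := mul_le_mul_of_nonneg_right hk hb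
  simp only [lyapunov]
  linarith [mul_nonneg hαs ha]

lemma neg_mul_le_lyapunov {k : ℕ} {B : ℝ} (hα : 0 ≤ α) (hαs : 0 ≤ αs k) (hk : αs k ≤ α)
    (hbB : b (k - 1) ≤ B) (hb : 0 ≤ b k) (hb' : 0 ≤ b (k - 1)) (ha : 0 ≤ a k) :
    -(α * B) ≤ lyapunov αs b a k := by
  have : αs k * b (k - 1) ≤ α * B := mul_le_mul hk hbB hb' hα
  simp only [lyapunov]
  linarith [mul_nonneg hαs ha]

end

/-- Abstract sequence lemma for Proposition 3.2: with monotone step sizes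
`0 ≤ αₖ ≤ α_{k+1} ≤ α < 1/3`, nonnegative `bₖ`, `aₖ` (`a₀ = 0`, `b₋₁ := b₀`)
satisfying `b_{k+1} − (1+αₖ)bₖ + αₖ b_{k−1} ≤ −(1−αₖ)a_{k+1} + 2αₖ aₖ`,
the sequence `μₖ = bₖ − αₖ b_{k−1} + 2αₖ aₖ` is nonincreasing,
`bₖ ≤ b₀/(1−α)` for all `k`, and `∑_{k=0}^∞ a_{k+1} ≤ b₀/((1−3α)(1−α))`. -/
theorem stmt_8 (α : ℝ) (hα : α < 1 / 3) (αs b a μ : ℕ → ℝ)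
    (hαs0 : ∀ k, 0 ≤ αs k) (hαsmono : ∀ k, αs k ≤ αs (k + 1))
    (hαsb : ∀ k, αs k ≤ α)
    (hb : ∀ k, 0 ≤ b k) (ha : ∀ k, 0 ≤ a k) (ha0 : a 0 = 0)
    (hrec : ∀ k, b (k + 1) - (1 + αs k) * b k + αs k * b (k - 1) ≤
      -(1 - αs k) * a (k + 1) + 2 * αs k * a k)
    (hμ : ∀ k, μ k = b k - αs k * b (k - 1) + 2 * αs k * a k) :
    (∀ k, μ (k + 1) ≤ μ k) ∧ (∀ k, b k ≤ b 0 / (1 - α)) ∧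
      (∑' k : ℕ, a (k + 1) ≤ b 0 / ((1 - 3 * α) * (1 - α))) := by
  obtain rfl : μ = lyapunov αs b a := funext hμ
  have hα0 : 0 ≤ α := (hαs0 0).trans (hαsb 0)
  have hgap : 0 < 1 - 3 * α := by linarith
  have hstep k := lyapunov_succ_add_le (hαsmono k) (hαsb k) (hαsb (k + 1)) (hb k) (ha (k + 1))
    (hrec k)
  have hanti : ∀ k, lyapunov αs b a (k + 1) ≤ lyapunov αs b a k := fun k => by
    linarith [hstep k, mul_nonneg hgap.le (ha (k + 1))]
  have hμ_le k : lyapunov αs b a k ≤ b 0 :=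
    (antitone_nat_of_succ_le hanti (Nat.zero_le k)).trans (lyapunov_zero_le (hαs0 0) (hb 0) ha0)
  have hbound := le_div_one_sub_of_le_add_mul_pred (C := b 0) hα0 (by linarith) fun k =>
    (le_lyapunov_add_mul_pred (hαs0 k) (hαsb k) (hb (k - 1)) (ha k)).trans
      (by linarith [hμ_le k])
  refine ⟨hanti, hbound, ?_⟩
  have hsum := tsum_le_sub_of_succ_add_le (fun k => mul_nonneg hgap.le (ha (k + 1))) hstep
    fun k => neg_mul_le_lyapunov hα0 (hαs0 k) (hαsb k) (hbound (k - 1)) (hb k) (hb (k - 1)) (ha k)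
  rw [tsum_mul_left] at hsum
  have hB : b 0 + α * (b 0 / (1 - α)) = b 0 / (1 - α) := by
    field_simp [show 1 - α ≠ 0 by linarith]
    ring
  rw [div_mul_eq_div_div_swap, le_div_iff₀ hgap]
  linarith [hμ_le 0]
end

section
/- Let β > 0, Aⱼ ∈ ℝ^{m×nⱼ} and symmetric Hⱼ ∈ ℝ^{nⱼ×nⱼ} for j = 2,…,l. If Hⱼ − β(l−2) AⱼᵀAⱼ is positive semidefinite for each j, then for all vectors uⱼ ∈ ℝ^{nⱼ}: ∑_{j=2}^{l} uⱼᵀ(Hⱼ + β AⱼᵀAⱼ)uⱼ − β ‖∑_{j=2}^{l} Aⱼ uⱼ‖₂² ≥ 0. -/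
/-! Writing `vⱼ = Aⱼuⱼ`, the hypothesis on block `j` gives `uⱼᵀHⱼuⱼ ≥ β(l−2)‖vⱼ‖²`, and
Cauchy–Schwarz over the `l − 1` blocks gives `‖∑ vⱼ‖² ≤ (l−1) ∑ ‖vⱼ‖²`; adding `β ∑ ‖vⱼ‖²` to the
first bound makes the two coefficients `β(l−1)` agree. -/

open Matrix

theorem Matrix.sum_dotProduct_sum_le_card_mul {α ι κ : Type*} [CommRing α] [LinearOrder α]
    [IsStrictOrderedRing α] [Fintype κ] (s : Finset ι) (v : ι → κ → α) :
    (∑ j ∈ s, v j) ⬝ᵥ (∑ j ∈ s, v j) ≤ s.card * ∑ j ∈ s, v j ⬝ᵥ v j := by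
  simp only [dotProduct, Finset.sum_apply, ← sq]
  rw [Finset.sum_comm, Finset.mul_sum]
  exact Finset.sum_le_sum fun _ _ => sq_sum_le_card_mul_sum_sq

theorem Matrix.dotProduct_transpose_mul_mulVec {α m n : Type*} [CommSemiring α] [Fintype m]
    [Fintype n] (A : Matrix m n α) (u : n → α) :
    u ⬝ᵥ (Aᵀ * A) *ᵥ u = A *ᵥ u ⬝ᵥ A *ᵥ u := by
  rw [← mulVec_mulVec, dotProduct_mulVec, vecMul_transpose]

theorem Matrix.PosSemidef.mul_mulVec_dotProduct_le_of_sub {α m n : Type*} [CommRing α]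
    [PartialOrder α] [IsOrderedRing α] [StarRing α] [TrivialStar α] [Fintype m] [Fintype n]
    {H : Matrix n n α} {A : Matrix m n α} {c : α} (h : (H - c • (Aᵀ * A)).PosSemidef)
    (u : n → α) : c * (A *ᵥ u ⬝ᵥ A *ᵥ u) ≤ u ⬝ᵥ H *ᵥ u := by
  have := h.dotProduct_mulVec_nonneg u
  rwa [star_trivial, sub_mulVec, dotProduct_sub, smul_mulVec, dotProduct_smul,
    dotProduct_transpose_mul_mulVec, smul_eq_mul, sub_nonneg] at this

theorem stmt_13_general {m l : ℕ} (hl : 2 ≤ l) {n : Fin (l - 1) → ℕ} (β : ℝ) (hβ : 0 < β)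
    (A : ∀ j : Fin (l - 1), Matrix (Fin m) (Fin (n j)) ℝ)
    (H : ∀ j : Fin (l - 1), Matrix (Fin (n j)) (Fin (n j)) ℝ)
    (hpsd : ∀ j, (H j - (β * ((l : ℝ) - 2)) • ((A j)ᵀ * A j)).PosSemidef) :
    ∀ u : (j : Fin (l - 1)) → (Fin (n j) → ℝ),
      0 ≤ ∑ j, u j ⬝ᵥ (H j + β • ((A j)ᵀ * A j)).mulVec (u j)
        - β * ((∑ j, (A j).mulVec (u j)) ⬝ᵥ (∑ j, (A j).mulVec (u j))) := by
  intro u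
  set v : Fin (l - 1) → Fin m → ℝ := fun j => A j *ᵥ u j
  have hsplit : ∑ j, u j ⬝ᵥ (H j + β • ((A j)ᵀ * A j)) *ᵥ u j
      = ∑ j, u j ⬝ᵥ H j *ᵥ u j + β * ∑ j, v j ⬝ᵥ v j := by
    simp only [add_mulVec, dotProduct_add, smul_mulVec, dotProduct_smul,
      dotProduct_transpose_mul_mulVec, smul_eq_mul, Finset.sum_add_distrib, Finset.mul_sum,
      v]
  have hblocks : β * ((l : ℝ) - 2) * ∑ j, v j ⬝ᵥ v j ≤ ∑ j, u j ⬝ᵥ H j *ᵥ u j := by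
    rw [Finset.mul_sum]
    exact Finset.sum_le_sum fun j _ => (hpsd j).mul_mulVec_dotProduct_le_of_sub (u j)
  have hcauchy : (∑ j, v j) ⬝ᵥ (∑ j, v j) ≤ ((l : ℝ) - 1) * ∑ j, v j ⬝ᵥ v j := by
    have := sum_dotProduct_sum_le_card_mul Finset.univ v
    rwa [Finset.card_univ, Fintype.card_fin, Nat.cast_sub (by omega), Nat.cast_one] at this
  have := mul_le_mul_of_nonneg_left hcauchy hβ.le
  rw [hsplit]
  linarith

/-- Positivity condition (3.21) for the block matrix `G₂`: if
`Hⱼ − β(l−2)AⱼᵀAⱼ ⪰ 0` for `j = 2,…,l`, then for all vectors `uⱼ`,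
`∑ⱼ uⱼᵀ(Hⱼ + β AⱼᵀAⱼ)uⱼ − β ‖∑ⱼ Aⱼuⱼ‖² ≥ 0`. Here the blocks `2,…,l`
are indexed by `Fin (l − 1)`. -/
theorem stmt_13 {m l : ℕ} (hl : 2 ≤ l) {n : Fin (l - 1) → ℕ} (β : ℝ) (hβ : 0 < β)
    (A : ∀ j : Fin (l - 1), Matrix (Fin m) (Fin (n j)) ℝ)
    (H : ∀ j : Fin (l - 1), Matrix (Fin (n j)) (Fin (n j)) ℝ)
    (hH : ∀ j, (H j).IsSymm)
    (hpsd : ∀ j, (H j - (β * ((l : ℝ) - 2)) • ((A j)ᵀ * A j)).PosSemidef) :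
    ∀ u : (j : Fin (l - 1)) → (Fin (n j) → ℝ),
      0 ≤ ∑ j, u j ⬝ᵥ (H j + β • ((A j)ᵀ * A j)).mulVec (u j)
        - β * ((∑ j, (A j).mulVec (u j)) ⬝ᵥ (∑ j, (A j).mulVec (u j))) :=
  stmt_13_general hl β hβ A H hpsd
end
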